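/- Let ρ ∈ L¹(ℝ²) with ∫_{ℝ²} ρ(x) dx = 0, and suppose the double integral ∫_{ℝ²}∫_{ℝ²} (−ln|x−y|) ρ(y) ρ(x) dy dx exists (i.e., ∫∫ |ln|x−y|| |ρ(y)| |ρ(x)| dy dx < ∞). Then ∫_{ℝ²}∫_{ℝ²} (−ln|x−y|) ρ(y) ρ(x) dy dx ≥ 0. -/

import Mathlib

open MeasureTheory Real

noncomputable section

abbrev E2 : Type := EuclideanSpace ℝ (Fin 2)

/-!
Frullani's integral gives `-log r = ∫₀^∞ (e^{-t r²} - e^{-t}) / (2t) dt` for `r > 0`, and the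
integrand has constant sign, so its absolute integral is `|log r|`. Hence the integrability
hypothesis on `log |x - y| ρ(x) ρ(y)` is exactly what Fubini needs to exchange the `t`-integral
with the double integral, and the energy becomes
`∫₀^∞ (2t)⁻¹ (∫∫ e^{-t|x-y|²} ρ(x) ρ(y) dx dy - e^{-t} (∫ ρ)²) dt`.
The second term vanishes by neutrality. The Gaussian kernel is positive definite because
`e^{-t|x-y|²}` is a positive multiple of `∫ e^{-2t|x-w|²} e^{-2t|y-w|²} dw`, which turns the double
integral into a positive multiple of `∫ (∫ e^{-2t|x-w|²} ρ(x) dx)² dw`.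
-/

open Set

lemma exp_neg_mul_sub_exp_neg_mul_nonneg {a b t : ℝ} (hab : a ≤ b) (ht : 0 ≤ t) :
    0 ≤ exp (-(a * t)) - exp (-(b * t)) :=
  sub_nonneg.2 (exp_le_exp.2 (by nlinarith))

lemma exp_neg_mul_sub_exp_neg_mul_le (a b t : ℝ) :
    exp (-(a * t)) - exp (-(b * t)) ≤ (b - a) * t * exp (-(a * t)) := by
  have hsplit : exp (-(b * t)) = exp (-(a * t)) * exp (-((b - a) * t)) := by
    rw [← exp_add]; ring_nf
  rw [hsplit]
  nlinarith [exp_pos (-(a * t)), add_one_le_exp (-((b - a) * t))]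

lemma integrableOn_frullani_exp_of_le {a b : ℝ} (ha : 0 < a) (hab : a ≤ b) :
    IntegrableOn (fun t => t⁻¹ * (exp (-(a * t)) - exp (-(b * t)))) (Ioi 0) := by
  refine ((exp_neg_integrableOn_Ioi 0 ha).const_mul (b - a)).mono' (by fun_prop) ?_
  filter_upwards [ae_restrict_mem measurableSet_Ioi] with t (ht : 0 < t)
  rw [norm_of_nonneg (mul_nonneg (inv_nonneg.2 ht.le)
    (exp_neg_mul_sub_exp_neg_mul_nonneg hab ht.le))]
  calc t⁻¹ * (exp (-(a * t)) - exp (-(b * t)))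
      ≤ t⁻¹ * ((b - a) * t * exp (-(a * t))) :=
        mul_le_mul_of_nonneg_left (exp_neg_mul_sub_exp_neg_mul_le a b t) (inv_nonneg.2 ht.le)
    _ = (b - a) * exp (-a * t) := by field_simp

lemma integrableOn_frullani_exp {a b : ℝ} (ha : 0 < a) (hb : 0 < b) :
    IntegrableOn (fun t => t⁻¹ * (exp (-(a * t)) - exp (-(b * t)))) (Ioi 0) := by
  rcases le_total a b with hab | hba
  · exact integrableOn_frullani_exp_of_le ha hab
  · exact (integrableOn_frullani_exp_of_le hb hba).neg.congr_fun
      (fun t _ => by simp only [Pi.neg_apply]; ring) measurableSet_Ioi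

lemma integral_frullani_exp {a b : ℝ} (ha : 0 < a) (hb : 0 < b) :
    ∫ t in Ioi 0, t⁻¹ * (exp (-(a * t)) - exp (-(b * t))) = log (b / a) := by
  have hcont : Continuous fun x : ℝ => exp (-x) := by fun_prop
  have h := Frullani.integral_Ioi_eq (f := fun x => exp (-x)) (L := 1) (R := 0)
    (hcont.locallyIntegrable.locallyIntegrableOn _) ha hb
    ((hcont.tendsto' 0 1 (by simp)).mono_left nhdsWithin_le_nhds)
    tendsto_exp_neg_atTop_nhds_zero (integrableOn_frullani_exp ha hb)
  simpa using h

lemma integral_abs_frullani_exp {a b : ℝ} (ha : 0 < a) (hb : 0 < b) :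
    ∫ t in Ioi 0, |t⁻¹ * (exp (-(a * t)) - exp (-(b * t)))| = |log (b / a)| := by
  wlog hab : a ≤ b generalizing a b
  · rw [← abs_neg, ← log_inv, inv_div, ← this hb ha (le_of_not_ge hab)]
    congr 1 with t
    rw [← abs_neg, ← mul_neg, neg_sub]
  rw [abs_of_nonneg (log_nonneg ((one_le_div ha).2 hab)), ← integral_frullani_exp ha hb]
  refine setIntegral_congr_fun measurableSet_Ioi fun t (ht : 0 < t) => abs_of_nonneg ?_
  exact mul_nonneg (inv_nonneg.2 ht.le) (exp_neg_mul_sub_exp_neg_mul_nonneg hab ht.le)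

def negLogIntegrand (r t : ℝ) : ℝ := (exp (-t * r ^ 2) - exp (-t)) / (2 * t)

lemma negLogIntegrand_eq (r t : ℝ) :
    negLogIntegrand r t = 2⁻¹ * (t⁻¹ * (exp (-(r ^ 2 * t)) - exp (-(1 * t)))) := by
  rw [negLogIntegrand, neg_mul, mul_comm t, one_mul, div_eq_mul_inv, mul_inv]
  ring

lemma integrableOn_negLogIntegrand {r : ℝ} (hr : 0 < r) :
    IntegrableOn (negLogIntegrand r) (Ioi 0) := by
  rw [funext (negLogIntegrand_eq r)]
  exact (integrableOn_frullani_exp (pow_pos hr 2) one_pos).const_mul _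

lemma integral_negLogIntegrand {r : ℝ} (hr : 0 < r) :
    ∫ t in Ioi 0, negLogIntegrand r t = -log r := by
  rw [funext (negLogIntegrand_eq r), integral_const_mul,
    integral_frullani_exp (pow_pos hr 2) one_pos, one_div, log_inv, log_pow]
  ring

lemma integral_abs_negLogIntegrand {r : ℝ} (hr : 0 < r) :
    ∫ t in Ioi 0, |negLogIntegrand r t| = |log r| := by
  have habs (t : ℝ) : |negLogIntegrand r t|
      = 2⁻¹ * |t⁻¹ * (exp (-(r ^ 2 * t)) - exp (-(1 * t)))| := by
    rw [negLogIntegrand_eq, abs_mul, abs_of_pos (by norm_num)]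
  rw [funext habs, integral_const_mul, integral_abs_frullani_exp (pow_pos hr 2) one_pos, one_div,
    log_inv, log_pow, abs_neg, abs_mul, Nat.cast_ofNat, abs_two]
  ring

section Gaussian

variable {V : Type*} [NormedAddCommGroup V] [InnerProductSpace ℝ V]

lemma gaussian_mul_gaussian_eq_midpoint (b : ℝ) (x y w : V) :
    exp (-(2 * b) * ‖x - w‖ ^ 2) * exp (-(2 * b) * ‖y - w‖ ^ 2)
      = exp (-(4 * b) * ‖midpoint ℝ x y - w‖ ^ 2) * exp (-b * ‖x - y‖ ^ 2) := by
  rw [← exp_add, ← exp_add]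
  congr 1
  have h := EuclideanGeometry.dist_sq_add_dist_sq_eq_two_mul_dist_midpoint_sq_add_half_dist_sq w x y
  rw [dist_comm w x, dist_comm w y, dist_comm w] at h
  simp only [dist_eq_norm] at h
  linear_combination (-(2 * b)) * h

variable [FiniteDimensional ℝ V] [MeasurableSpace V] [BorelSpace V]

lemma integrable_rexp_neg_mul_sq_norm {b : ℝ} (hb : 0 < b) :
    Integrable fun v : V => exp (-b * ‖v‖ ^ 2) :=
  Integrable.of_integral_ne_zero <| by
    rw [GaussianFourier.integral_rexp_neg_mul_sq_norm hb]; positivity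

lemma integral_gaussian_mul_gaussian {b : ℝ} (hb : 0 < b) (x y : V) :
    ∫ w, exp (-(2 * b) * ‖x - w‖ ^ 2) * exp (-(2 * b) * ‖y - w‖ ^ 2)
      = (π / (4 * b)) ^ (Module.finrank ℝ V / 2 : ℝ) * exp (-b * ‖x - y‖ ^ 2) := by
  simp_rw [gaussian_mul_gaussian_eq_midpoint b x y]
  rw [integral_mul_const, integral_sub_left_eq_self (fun w : V => exp (-(4 * b) * ‖w‖ ^ 2)),
    GaussianFourier.integral_rexp_neg_mul_sq_norm (by positivity)]

lemma integrable_gaussian_mul_gaussian {b : ℝ} (hb : 0 < b) (x y : V) :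
    Integrable fun w => exp (-(2 * b) * ‖x - w‖ ^ 2) * exp (-(2 * b) * ‖y - w‖ ^ 2) := by
  simp_rw [gaussian_mul_gaussian_eq_midpoint b x y]
  exact ((integrable_rexp_neg_mul_sq_norm (by positivity)).comp_sub_left _).mul_const _

variable {μ : Measure V}

lemma integrable_gaussian_kernel_mul {b : ℝ} (hb : 0 ≤ b) {ρ : V → ℝ} (hρ : Integrable ρ μ) :
    Integrable (fun z : V × V => exp (-b * ‖z.1 - z.2‖ ^ 2) * (ρ z.1 * ρ z.2)) (μ.prod μ) := by
  refine (hρ.mul_prod hρ).bdd_mul (c := 1) (by fun_prop) (ae_of_all _ fun z => ?_)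
  rw [norm_of_nonneg (exp_nonneg _), exp_le_one_iff]
  exact mul_nonpos_of_nonpos_of_nonneg (neg_nonpos.2 hb) (sq_nonneg _)

theorem integral_gaussian_kernel_nonneg [SFinite μ] {b : ℝ} (hb : 0 < b) {ρ : V → ℝ}
    (hρ : Integrable ρ μ) :
    0 ≤ ∫ z, exp (-b * ‖z.1 - z.2‖ ^ 2) * (ρ z.1 * ρ z.2) ∂μ.prod μ := by
  set c := (π / (4 * b)) ^ (Module.finrank ℝ V / 2 : ℝ)
  have hc : 0 < c := by positivity
  set g : V → V → ℝ := fun x w => exp (-(2 * b) * ‖x - w‖ ^ 2)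
  set H : (V × V) × V → ℝ := fun p => g p.1.1 p.2 * g p.1.2 p.2 * (ρ p.1.1 * ρ p.1.2)
  have hH (z : V × V) :
      ∫ w, H (z, w) = c * (exp (-b * ‖z.1 - z.2‖ ^ 2) * (ρ z.1 * ρ z.2)) := by
    simp only [H, g]
    rw [integral_mul_const, integral_gaussian_mul_gaussian hb, mul_assoc]
  have hHnorm (z : V × V) :
      ∫ w, ‖H (z, w)‖ = c * ‖exp (-b * ‖z.1 - z.2‖ ^ 2) * (ρ z.1 * ρ z.2)‖ := by
    simp only [H, g, norm_mul, norm_of_nonneg (exp_nonneg _)]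
    rw [integral_mul_const, integral_gaussian_mul_gaussian hb, mul_assoc]
  have hHint : Integrable H ((μ.prod μ).prod volume) := by
    have hmeas : AEStronglyMeasurable H ((μ.prod μ).prod volume) :=
      (by fun_prop : Continuous fun p : (V × V) × V => g p.1.1 p.2 * g p.1.2 p.2)
        |>.aestronglyMeasurable.mul
          (hρ.1.comp_fst.mul hρ.1.comp_snd).comp_fst
    rw [integrable_prod_iff hmeas]
    refine ⟨ae_of_all _ fun z => (integrable_gaussian_mul_gaussian hb z.1 z.2).mul_const
      (ρ z.1 * ρ z.2), ?_⟩
    simp_rw [hHnorm]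
    exact (integrable_gaussian_kernel_mul hb.le hρ).norm.const_mul c
  have hsq (w : V) : ∫ z, H (z, w) ∂μ.prod μ = (∫ x, g x w * ρ x ∂μ) ^ 2 := by
    rw [sq, ← integral_prod_mul]
    congr 1 with z
    ring
  calc 0 ≤ c⁻¹ * ∫ w, (∫ x, g x w * ρ x ∂μ) ^ 2 :=
        mul_nonneg (inv_nonneg.2 hc.le) (integral_nonneg fun w => sq_nonneg _)
    _ = c⁻¹ * ∫ z, (∫ w, H (z, w)) ∂μ.prod μ := by
        simp_rw [← hsq]
        rw [integral_integral_swap (f := fun z w => H (z, w)) hHint]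
    _ = ∫ z, exp (-b * ‖z.1 - z.2‖ ^ 2) * (ρ z.1 * ρ z.2) ∂μ.prod μ := by
        simp_rw [hH]; rw [integral_const_mul, inv_mul_cancel_left₀ hc.ne']

end Gaussian

lemma ae_fst_ne_snd {α : Type*} [MeasurableSpace α] [MeasurableEq α] {μ : Measure α} [SFinite μ]
    [NullSingletonClass μ] : ∀ᵐ z ∂μ.prod μ, z.1 ≠ z.2 := by
  have hdiag : MeasurableSet {z : α × α | ¬z.1 ≠ z.2} := by
    simp only [not_not]
    exact measurableSet_diagonal
  rw [ae_iff, Measure.measure_prod_null hdiag]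
  refine ae_of_all _ fun x => ?_
  simp [Set.preimage]

section LogKernel

variable {V : Type*} [NormedAddCommGroup V] [InnerProductSpace ℝ V] [FiniteDimensional ℝ V]
  [MeasurableSpace V] [BorelSpace V] {μ : Measure V} [SFinite μ]

lemma integral_negLogIntegrand_kernel_nonneg {t : ℝ} (ht : 0 < t) {ρ : V → ℝ}
    (hρ : Integrable ρ μ) (hzero : ∫ x, ρ x ∂μ = 0) :
    0 ≤ ∫ z, negLogIntegrand ‖z.1 - z.2‖ t * (ρ z.1 * ρ z.2) ∂μ.prod μ := by
  have hsplit (z : V × V) : negLogIntegrand ‖z.1 - z.2‖ t * (ρ z.1 * ρ z.2)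
      = (2 * t)⁻¹ * (exp (-t * ‖z.1 - z.2‖ ^ 2) * (ρ z.1 * ρ z.2))
        - exp (-t) / (2 * t) * (ρ z.1 * ρ z.2) := by
    rw [negLogIntegrand]; ring
  simp_rw [hsplit]
  rw [integral_sub ((integrable_gaussian_kernel_mul ht.le hρ).const_mul _)
      ((hρ.mul_prod hρ).const_mul _), integral_const_mul, integral_const_mul, integral_prod_mul,
    hzero, mul_zero, mul_zero, sub_zero]
  exact mul_nonneg (by positivity) (integral_gaussian_kernel_nonneg ht hρ)

theorem integral_neg_log_kernel_nonneg [NullSingletonClass μ] {ρ : V → ℝ} (hρ : Integrable ρ μ)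
    (hzero : ∫ x, ρ x ∂μ = 0)
    (hker : Integrable (fun z : V × V => log ‖z.1 - z.2‖ * ρ z.1 * ρ z.2) (μ.prod μ)) :
    0 ≤ ∫ z, -log ‖z.1 - z.2‖ * (ρ z.1 * ρ z.2) ∂μ.prod μ := by
  set Φ : (V × V) × ℝ → ℝ := fun p => negLogIntegrand ‖p.1.1 - p.1.2‖ p.2 * (ρ p.1.1 * ρ p.1.2)
  have hΦ : ∀ᵐ z ∂μ.prod μ, ∫ t in Ioi 0, Φ (z, t) = -log ‖z.1 - z.2‖ * (ρ z.1 * ρ z.2) := by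
    filter_upwards [ae_fst_ne_snd] with z hz
    rw [integral_mul_const (ρ z.1 * ρ z.2),
      integral_negLogIntegrand (norm_pos_iff.2 (sub_ne_zero.2 hz))]
  have hΦnorm : ∀ᵐ z ∂μ.prod μ,
      ∫ t in Ioi 0, ‖Φ (z, t)‖ = ‖log ‖z.1 - z.2‖ * ρ z.1 * ρ z.2‖ := by
    filter_upwards [ae_fst_ne_snd] with z hz
    simp only [Φ, norm_mul, norm_eq_abs]
    rw [integral_mul_const, integral_abs_negLogIntegrand (norm_pos_iff.2 (sub_ne_zero.2 hz)),
      mul_assoc]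
  have hΦint : Integrable Φ ((μ.prod μ).prod (volume.restrict (Ioi 0))) := by
    have hmeas : AEStronglyMeasurable Φ ((μ.prod μ).prod (volume.restrict (Ioi 0))) :=
      (by unfold negLogIntegrand; fun_prop :
          Measurable fun p : (V × V) × ℝ => negLogIntegrand ‖p.1.1 - p.1.2‖ p.2)
        |>.aestronglyMeasurable.mul (hρ.1.comp_fst.mul hρ.1.comp_snd).comp_fst
    rw [integrable_prod_iff hmeas]
    refine ⟨?_, hker.norm.congr (hΦnorm.mono fun z h => h.symm)⟩
    filter_upwards [ae_fst_ne_snd] with z hz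
    exact (integrableOn_negLogIntegrand (norm_pos_iff.2 (sub_ne_zero.2 hz))).mul_const
      (ρ z.1 * ρ z.2)
  rw [← integral_congr_ae hΦ, integral_integral_swap (f := fun z t => Φ (z, t)) hΦint]
  exact setIntegral_nonneg measurableSet_Ioi fun t ht =>
    integral_negLogIntegrand_kernel_nonneg ht hρ hzero

end LogKernel

/-- Positive definiteness of the two-dimensional Newtonian kernel `-ln|x-y|` on densities
of zero total charge: if `ρ ∈ L¹(ℝ²)` has `∫ ρ = 0` and the double integral exists
(i.e. `(x,y) ↦ ln|x-y| ρ(x) ρ(y)` is integrable on `ℝ²×ℝ²`), then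
`∫∫ (-ln|x-y|) ρ(y) ρ(x) dy dx ≥ 0`. -/
theorem stmt7 (ρ : E2 → ℝ) (hρ : Integrable ρ) (hzero : ∫ x : E2, ρ x = 0)
    (hker : Integrable (fun z : E2 × E2 => Real.log ‖z.1 - z.2‖ * ρ z.1 * ρ z.2)) :
    0 ≤ ∫ x : E2, ∫ y : E2, (-Real.log ‖x - y‖) * ρ y * ρ x := by
  have hint : Integrable (Function.uncurry fun x y : E2 => (-Real.log ‖x - y‖) * ρ y * ρ x)
      (volume.prod volume) :=
    hker.neg.congr (ae_of_all _ fun z => by simp only [Pi.neg_apply, Function.uncurry]; ring)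
  calc 0 ≤ ∫ z : E2 × E2, -Real.log ‖z.1 - z.2‖ * (ρ z.1 * ρ z.2) :=
        integral_neg_log_kernel_nonneg hρ hzero hker
    _ = _ := by
        rw [integral_integral hint]
        congr 1 with z
        ring
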